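/- (m-Permutability for (F,Η)) Let F be an r-sort species admitting a composition operator Η. If Ω1,...,Ωm (m ≥ 2) are pairwise componentwise-disjoint r-tuples of finite sets, then all Η-bracketings of F[Ω1],...,F[Ωm] are equal to each other; indeed, each equals the intersection, over all ordered pairs (I,J) of nonempty disjoint subsets with I ∪ J = {1,...,m}, of the sets η(F[Ω_I] × F[Ω_J]), where Ω_I denotes the componentwise disjoint union of the Ωi for i ∈ I. -/

import Mathlib

open scoped Classical

noncomputable section

/-- Objects of `Set^r`: `r`-tuples of finite sets (realized as finite subsets of `ℕ`). -/
abbrev Obj (r : ℕ) := Fin r → Finset ℕ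

variable {r : ℕ}

/-- The `r`-tuple of empty sets. -/
def oEmpty (r : ℕ) : Obj r := fun _ => ∅

/-- Componentwise union (the disjoint union `⨿` when the arguments are
componentwise disjoint). -/
def oUnion (Ω₁ Ω₂ : Obj r) : Obj r := fun i => Ω₁ i ∪ Ω₂ i

/-- Componentwise intersection. -/
def oInter (Ω₁ Ω₂ : Obj r) : Obj r := fun i => Ω₁ i ∩ Ω₂ i

/-- Componentwise set difference. -/
def oDiff (Ω₁ Ω₂ : Obj r) : Obj r := fun i => Ω₁ i \ Ω₂ i

/-- Componentwise disjointness. -/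
def oDisj (Ω₁ Ω₂ : Obj r) : Prop := ∀ i, Disjoint (Ω₁ i) (Ω₂ i)

/-- Componentwise containment. -/
def oSub (Ω₁ Ω₂ : Obj r) : Prop := ∀ i, Ω₁ i ⊆ Ω₂ i

/-- A morphism of `Set^r`: an `r`-tuple of bijections between the components. -/
def Mor (Ω₁ Ω₂ : Obj r) : Type := ∀ i, {x // x ∈ Ω₁ i} ≃ {x // x ∈ Ω₂ i}

/-- The identity morphism. -/
def idMor (Ω : Obj r) : Mor Ω Ω := fun _ => Equiv.refl _

/-- Composition of morphisms. -/
def compMor {Ω₁ Ω₂ Ω₃ : Obj r} (f : Mor Ω₁ Ω₂) (g : Mor Ω₂ Ω₃) : Mor Ω₁ Ω₃ :=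
  fun i => (f i).trans (g i)

/-- An `r`-sort species: a (covariant) functor from `Set^r` to the category of
finite sets and bijections.  The value `F[Ω]` is the finite set `obj Ω`, and the
action on a morphism `f` is encoded by the function `map f : ℕ → ℕ` (only its
values on `obj Ω₁` are relevant). -/
structure Species (r : ℕ) where
  obj : Obj r → Finset ℕ
  map : ∀ {Ω₁ Ω₂ : Obj r}, Mor Ω₁ Ω₂ → ℕ → ℕ
  map_mem : ∀ {Ω₁ Ω₂ : Obj r} (f : Mor Ω₁ Ω₂), ∀ x ∈ obj Ω₁, map f x ∈ obj Ω₂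
  map_id : ∀ (Ω : Obj r), ∀ x ∈ obj Ω, map (idMor Ω) x = x
  map_comp : ∀ {Ω₁ Ω₂ Ω₃ : Obj r} (f : Mor Ω₁ Ω₂) (g : Mor Ω₂ Ω₃), ∀ x ∈ obj Ω₁,
    map (compMor f g) x = map g (map f x)

/-- The canonical identification of a disjoint union `s ∪ t` with the sum `s ⊕ t`. -/
def finsetSumEquiv {s t : Finset ℕ} (h : Disjoint s t) :
    {x // x ∈ s ∪ t} ≃ {x // x ∈ s} ⊕ {x // x ∈ t} :=
  (Equiv.subtypeEquivRight (fun x => by simp)).trans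
    (Equiv.Set.union (s := (↑s : Set ℕ)) (t := (↑t : Set ℕ)) (by exact_mod_cast h))

/-- The disjoint union of two bijections, as a bijection between unions. -/
def finsetUnionEquiv {s t s' t' : Finset ℕ} (h : Disjoint s t) (h' : Disjoint s' t')
    (f : {x // x ∈ s} ≃ {x // x ∈ s'}) (g : {x // x ∈ t} ≃ {x // x ∈ t'}) :
    {x // x ∈ s ∪ t} ≃ {x // x ∈ s' ∪ t'} :=
  (finsetSumEquiv h).trans ((f.sumCongr g).trans (finsetSumEquiv h').symm)

/-- The disjoint union `f ⨿ g` of two morphisms of `Set^r`. -/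
def morUnion {Ω₁ Ω₂ Ω₁' Ω₂' : Obj r} (h : oDisj Ω₁ Ω₂) (h' : oDisj Ω₁' Ω₂')
    (f : Mor Ω₁ Ω₁') (g : Mor Ω₂ Ω₂') : Mor (oUnion Ω₁ Ω₂) (oUnion Ω₁' Ω₂') :=
  fun i => finsetUnionEquiv (h i) (h' i) (f i) (g i)

/-- A composition operator `Η` for the species `F`: a natural transformation from
`F × F` (on pairs of componentwise disjoint objects) to `F ∘ ⨿` with injective
components, satisfying Axiom (D1). -/
structure CompOp {r : ℕ} (F : Species r) where
  η : Obj r → Obj r → ℕ × ℕ → ℕ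
  mem_η : ∀ {Ω₁ Ω₂ : Obj r}, oDisj Ω₁ Ω₂ → ∀ x ∈ F.obj Ω₁, ∀ y ∈ F.obj Ω₂,
    η Ω₁ Ω₂ (x, y) ∈ F.obj (oUnion Ω₁ Ω₂)
  inj_η : ∀ {Ω₁ Ω₂ : Obj r}, oDisj Ω₁ Ω₂ →
    Set.InjOn (η Ω₁ Ω₂) ((F.obj Ω₁ : Set ℕ) ×ˢ (F.obj Ω₂ : Set ℕ))
  natural : ∀ {Ω₁ Ω₂ Ω₁' Ω₂' : Obj r} (h : oDisj Ω₁ Ω₂) (h' : oDisj Ω₁' Ω₂')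
    (f : Mor Ω₁ Ω₁') (g : Mor Ω₂ Ω₂'), ∀ x ∈ F.obj Ω₁, ∀ y ∈ F.obj Ω₂,
    F.map (morUnion h h' f g) (η Ω₁ Ω₂ (x, y)) = η Ω₁' Ω₂' (F.map f x, F.map g y)
  D1 : ∀ {Ω₁ Ω₂ Ω₃ Ω₄ : Obj r}, oDisj Ω₁ Ω₂ → oDisj Ω₃ Ω₄ →
    oUnion Ω₁ Ω₂ = oUnion Ω₃ Ω₄ →
    η Ω₁ Ω₂ '' ((F.obj Ω₁ : Set ℕ) ×ˢ (F.obj Ω₂ : Set ℕ)) ∩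
      η Ω₃ Ω₄ '' ((F.obj Ω₃ : Set ℕ) ×ˢ (F.obj Ω₄ : Set ℕ)) =
    η Ω₁ Ω₂ ''
      ((η (oInter Ω₁ Ω₃) (oInter Ω₁ Ω₄) ''
          ((F.obj (oInter Ω₁ Ω₃) : Set ℕ) ×ˢ (F.obj (oInter Ω₁ Ω₄) : Set ℕ))) ×ˢ
        (η (oInter Ω₂ Ω₃) (oInter Ω₂ Ω₄) ''
          ((F.obj (oInter Ω₂ Ω₃) : Set ℕ) ×ˢ (F.obj (oInter Ω₂ Ω₄) : Set ℕ))))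

/-- The set `F_Η[Ω]` of indecomposable elements of `F[Ω]`. -/
def indec (F : Species r) (E : CompOp F) (Ω : Obj r) : Set ℕ :=
  if Ω = oEmpty r then ∅
  else (F.obj Ω : Set ℕ) \
    ⋃ (p : Obj r × Obj r) (_ : oDisj p.1 p.2) (_ : p.1 ≠ oEmpty r) (_ : p.2 ≠ oEmpty r)
      (_ : oUnion p.1 p.2 = Ω),
      E.η p.1 p.2 '' ((F.obj p.1 : Set ℕ) ×ˢ (F.obj p.2 : Set ℕ))

/-- The sets `F_Η^(k)[Ω]` of elements of `F[Ω]` consisting of exactly `k`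
indecomposable components. -/
def indecK (F : Species r) (E : CompOp F) : ℕ → Obj r → Set ℕ
  | 0 => fun Ω => if Ω = oEmpty r then (F.obj (oEmpty r) : Set ℕ) else ∅
  | (k + 1) => fun Ω => ⋃ (Ω₁ : Obj r) (_ : oSub Ω₁ Ω),
      E.η Ω₁ (oDiff Ω Ω₁) '' ((indec F E Ω₁) ×ˢ (indecK F E k (oDiff Ω Ω₁)))

/-- `Ω_I`: the componentwise disjoint union of the family `Ωs` over the index set `s`. -/
def bigU {ι : Type} [DecidableEq ι] (Ωs : ι → Obj r) (s : Finset ι) : Obj r :=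
  fun i => s.biUnion (fun j => Ωs j i)

/-- `Brack F E Ωs leaf s B` says that `B` is an `Η`-bracketing of the sets
`leaf (Ωs i)`, `i ∈ s` (each occurring exactly once).  For `leaf Ω = F[Ω]` this is an
`Η`-bracketing of the `F[Ωs i]`; for `leaf = indec F E` it is an `Η`-bracketing of
the `F_Η[Ωs i]`. -/
inductive Brack (F : Species r) (E : CompOp F) {ι : Type} [DecidableEq ι]
    (Ωs : ι → Obj r) (leaf : Obj r → Set ℕ) : Finset ι → Set ℕ → Prop
  | single (i : ι) : Brack F E Ωs leaf {i} (leaf (Ωs i))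
  | node {s t : Finset ι} {B₁ B₂ : Set ℕ} :
      Disjoint s t → s.Nonempty → t.Nonempty →
      Brack F E Ωs leaf s B₁ → Brack F E Ωs leaf t B₂ →
      Brack F E Ωs leaf (s ∪ t) (E.η (bigU Ωs s) (bigU Ωs t) '' (B₁ ×ˢ B₂))

/-- A `Λ`-weight on `(F, Η)`: Axioms (W0), (W1), (W2). -/
structure Weight {r : ℕ} (F : Species r) (E : CompOp F) (Λ : Type) [CommRing Λ]
    [Algebra ℚ Λ] where
  w : Obj r → ℕ → Λ
  W0 : ∀ x ∈ F.obj (oEmpty r), w (oEmpty r) x = 1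
  W1 : ∀ {Ω Ω' : Obj r} (f : Mor Ω Ω'), ∀ x ∈ F.obj Ω, w Ω' (F.map f x) = w Ω x
  W2 : ∀ {Ω₁ Ω₂ : Obj r}, oDisj Ω₁ Ω₂ → ∀ x ∈ indec F E Ω₁, ∀ y ∈ F.obj Ω₂,
    w (oUnion Ω₁ Ω₂) (E.η Ω₁ Ω₂ (x, y)) = w Ω₁ x * w Ω₂ y

/-- The standard object `([n₁], …, [n_r])`, with `[n] = {1, …, n}`. -/
def stdObj {r : ℕ} (n : Fin r → ℕ) : Obj r := fun i => Finset.Icc 1 (n i)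

/-- The exponential generating function
`Σ_{n₁,…,n_r ≥ 0} Σ_{x ∈ S[([n₁],…,[n_r])]} w(x) z₁^{n₁} ⋯ z_r^{n_r}/(n₁! ⋯ n_r!)`
of a subfamily `S` of a species `F`, with respect to a weight `w`. -/
def GF {r : ℕ} {Λ : Type} [CommRing Λ] [Algebra ℚ Λ] (F : Species r)
    (S : Obj r → Set ℕ) (w : Obj r → ℕ → Λ) : MvPowerSeries (Fin r) Λ :=
  fun d => (algebraMap ℚ Λ (∏ i, (1 / (Nat.factorial (d i)) : ℚ))) *
    ∑ x ∈ (F.obj (stdObj fun i => d i)).filter (fun x => x ∈ S (stdObj fun i => d i)),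
      w (stdObj fun i => d i) x

/-- The exponential `exp f = Σ_{k ≥ 0} f^k / k!` of a multivariate formal power
series `f` with zero constant term (the coefficient of a given monomial only
receives contributions from `k` at most the total degree). -/
def mvExp {σ Λ : Type} [CommRing Λ] [Algebra ℚ Λ] (f : MvPowerSeries σ Λ) :
    MvPowerSeries σ Λ :=
  fun d => ∑ k ∈ Finset.range ((d.sum fun _ m => m) + 1),
    algebraMap ℚ Λ ((1 : ℚ) / (Nat.factorial k)) * MvPowerSeries.coeff d (f ^ k)

/-- The logarithm `log f = Σ_{k ≥ 1} (-1)^{k+1} (f-1)^k / k` of a multivariate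
formal power series `f` with constant term `1`. -/
def mvLog {σ Λ : Type} [CommRing Λ] [Algebra ℚ Λ] (f : MvPowerSeries σ Λ) :
    MvPowerSeries σ Λ :=
  fun d => ∑ k ∈ Finset.Icc 1 (d.sum fun _ m => m),
    algebraMap ℚ Λ ((-1 : ℚ) ^ (k + 1) / k) * MvPowerSeries.coeff d ((f - 1) ^ k)

/-- The refined generating function `G̃F_F(z₁,…,z_r,y)`, a power series in
`z₁, …, z_r` with coefficients that are polynomials in `y` (recorded via
`Polynomial Λ`, the variable `y` being `Polynomial.X`):
`Σ_{n₁,…,n_r ≥ 0} Σ_k Σ_{x ∈ F_Η^(k)[([n₁],…,[n_r])]} y^k w(x) z₁^{n₁}⋯z_r^{n_r}/(n₁!⋯n_r!)`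
(for fixed `n₁, …, n_r` only the `k ≤ n₁ + ⋯ + n_r` contribute, since
`F_Η^(k)[Ω] = ∅ for k > ‖Ω‖`). -/
def tGF {r : ℕ} {Λ : Type} [CommRing Λ] [Algebra ℚ Λ] (F : Species r) (E : CompOp F)
    (w : Obj r → ℕ → Λ) : MvPowerSeries (Fin r) (Polynomial Λ) :=
  fun d => Polynomial.C (algebraMap ℚ Λ (∏ i, (1 / (Nat.factorial (d i)) : ℚ))) *
    ∑ k ∈ Finset.range ((∑ i, d i) + 1), Polynomial.X ^ k *
      Polynomial.C (∑ x ∈ (F.obj (stdObj fun i => d i)).filter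
          (fun x => x ∈ indecK F E k (stdObj fun i => d i)),
        w (stdObj fun i => d i) x)

/-- The species `E(F_Η)` of sets of `F_Η`-structures:  `E(F_Η)[Ω]` consists of all
finite sets `{(x₁,Ω₁),…,(x_k,Ω_k)}` with `x_i ∈ F_Η[Ω_i]`, the `Ω_i` nonempty and
pairwise componentwise disjoint, and `Ω₁ ⨿ ⋯ ⨿ Ω_k = Ω`. -/
def ESet {r : ℕ} (F : Species r) (E : CompOp F) (Ω : Obj r) :
    Set (Finset (ℕ × Obj r)) :=
  { s | (∀ p ∈ s, p.1 ∈ indec F E p.2 ∧ p.2 ≠ oEmpty r) ∧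
        (∀ p ∈ s, ∀ q ∈ s, p ≠ q → oDisj p.2 q.2) ∧
        (∀ i, Ω i = s.biUnion (fun p => p.2 i)) }

/-- The bijection between a finite set and its image under a map injective on it. -/
def imageEquiv {u : Finset ℕ} (g : ℕ → ℕ) (hg : Set.InjOn g (u : Set ℕ)) :
    {x // x ∈ u} ≃ {x // x ∈ u.image g} :=
  Equiv.ofBijective (fun x => ⟨g x, Finset.mem_image_of_mem g x.2⟩) (by
    constructor
    · rintro ⟨a, ha⟩ ⟨b, hb⟩ hab
      exact Subtype.ext (hg (by exact_mod_cast ha) (by exact_mod_cast hb)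
        (congrArg Subtype.val hab))
    · rintro ⟨y, hy⟩
      rcases Finset.mem_image.mp hy with ⟨a, ha, rfl⟩
      exact ⟨⟨a, ha⟩, rfl⟩)

/-- The underlying function `ℕ → ℕ` of the `i`-th component of a morphism. -/
def apMor {Ω Ω' : Obj r} (f : Mor Ω Ω') (i : Fin r) (a : ℕ) : ℕ :=
  if h : a ∈ Ω i then ((f i) ⟨a, h⟩ : ℕ) else a

/-- The componentwise image of a subobject `O ⊆ Ω` under a morphism `f : Ω → Ω'`. -/
def oImage {Ω Ω' : Obj r} (f : Mor Ω Ω') (O : Obj r) : Obj r :=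
  fun i => (O i).image (apMor f i)

/-- The restriction of a morphism `f : Ω → Ω'` to a subobject `O ⊆ Ω`. -/
def restrictMor {Ω Ω' : Obj r} (f : Mor Ω Ω') {O : Obj r} (hO : oSub O Ω) :
    Mor O (oImage f O) :=
  fun i => imageEquiv (apMor f i) (by
    intro a ha b hb hab
    have ha' : a ∈ Ω i := hO i (by exact_mod_cast ha)
    have hb' : b ∈ Ω i := hO i (by exact_mod_cast hb)
    have h1 : ((f i) ⟨a, ha'⟩ : ℕ) = ((f i) ⟨b, hb'⟩ : ℕ) := by
      simpa [apMor, dif_pos ha', dif_pos hb'] using hab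
    have h2 := (f i).injective (Subtype.ext h1)
    exact congrArg Subtype.val h2)

/-- The induced action of a morphism `f : Ω → Ω'` on `E(F_Η)[Ω]`. -/
def Emap {r : ℕ} (F : Species r) {Ω Ω' : Obj r} (f : Mor Ω Ω')
    (s : Finset (ℕ × Obj r)) : Finset (ℕ × Obj r) :=
  s.image (fun p =>
    if h : oSub p.2 Ω then (F.map (restrictMor f h) p.1, oImage f p.2) else p)

/-!
By Axiom (D1) and the injectivity of `η`, an element `η(x, y)` with `x ∈ F[Ω₁]`, `y ∈ F[Ω₂]`
lies in `η(F[Ω₃] × F[Ω₄])` exactly when `x ∈ η(F[Ω₁ ∩ Ω₃] × F[Ω₁ ∩ Ω₄])` and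
`y ∈ η(F[Ω₂ ∩ Ω₃] × F[Ω₂ ∩ Ω₄])`. By induction on the bracketing, every bracketing of the
`F[Ωᵢ]`, `i ∈ s`, is therefore `F[Ω_s] ∩ ⋂ η(F[Ω_I] × F[Ω_J])` over the splittings `s = I ⨿ J`
into nonempty parts: a splitting of `s ∪ t` restricts to splittings of `s` and of `t`, and
conversely a splitting of `s` extends to one of `s ∪ t` by adding `t` to one side. When a
restriction is trivial (one part empty), the element of the other half of the bracket, applied
to (D1) with `Ω₁ ⨿ Ω₂ = Ω₁ ⨿ Ω₂`, supplies the factorisation through `F[∅]`. Finally, for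
`|s| ≥ 2` the intersection already lies in `F[Ω_s]`.
-/

lemma oInter_self (Ω : Obj r) : oInter Ω Ω = Ω := by
  funext i; simp [oInter]

lemma oInter_oUnion_left (Ω₁ Ω₂ : Obj r) : oInter Ω₁ (oUnion Ω₁ Ω₂) = Ω₁ := by
  funext i; simp [oInter, oUnion]

lemma oInter_oUnion_right (Ω₁ Ω₂ : Obj r) : oInter Ω₂ (oUnion Ω₁ Ω₂) = Ω₂ := by
  funext i; simp [oInter, oUnion]

lemma oInter_oUnion (Ω Ω₁ Ω₂ : Obj r) :
    oInter Ω (oUnion Ω₁ Ω₂) = oUnion (oInter Ω Ω₁) (oInter Ω Ω₂) := by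
  funext i; exact Finset.inter_union_distrib_left _ _ _

lemma oDisj.symm {Ω₁ Ω₂ : Obj r} (h : oDisj Ω₁ Ω₂) : oDisj Ω₂ Ω₁ :=
  fun i => (h i).symm

lemma oDisj.inter_inter {Ω₁ Ω₂ : Obj r} (h : oDisj Ω₁ Ω₂) (Ω Ω' : Obj r) :
    oDisj (oInter Ω Ω₁) (oInter Ω' Ω₂) :=
  fun i => (h i).mono Finset.inter_subset_right Finset.inter_subset_right

lemma oDisj.oInter_eq_oEmpty {Ω₁ Ω₂ : Obj r} (h : oDisj Ω₁ Ω₂) :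
    oInter Ω₁ Ω₂ = oEmpty r := by
  funext i; exact Finset.disjoint_iff_inter_eq_empty.mp (h i)

section bigU

variable {ι : Type} [DecidableEq ι] {Ωs : ι → Obj r}

@[simp]
lemma bigU_empty : bigU Ωs (∅ : Finset ι) = oEmpty r := by
  funext i; simp [bigU, oEmpty]

@[simp]
lemma bigU_singleton (i : ι) : bigU Ωs {i} = Ωs i := by
  funext j; simp [bigU]

lemma bigU_union (s t : Finset ι) : bigU Ωs (s ∪ t) = oUnion (bigU Ωs s) (bigU Ωs t) := by
  funext i; exact Finset.union_biUnion

lemma oDisj_bigU (hd : ∀ i j, i ≠ j → oDisj (Ωs i) (Ωs j)) {s t : Finset ι}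
    (hst : Disjoint s t) : oDisj (bigU Ωs s) (bigU Ωs t) :=
  fun k => (Finset.disjoint_biUnion_left ..).mpr fun a ha =>
    (Finset.disjoint_biUnion_right ..).mpr fun b hb =>
      hd a b (fun hab => Finset.disjoint_left.mp hst ha (hab ▸ hb)) k

lemma oInter_bigU (hd : ∀ i j, i ≠ j → oDisj (Ωs i) (Ωs j)) (s t : Finset ι) :
    oInter (bigU Ωs s) (bigU Ωs t) = bigU Ωs (s ∩ t) := by
  funext k; ext x
  simp only [oInter, bigU, Finset.mem_inter, Finset.mem_biUnion]
  constructor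
  · rintro ⟨⟨a, ha, hxa⟩, b, hb, hxb⟩
    obtain rfl : a = b := by
      by_contra hab
      exact Finset.disjoint_left.mp (hd a b hab k) hxa hxb
    exact ⟨a, ⟨ha, hb⟩, hxa⟩
  · rintro ⟨a, ⟨ha, ha'⟩, hxa⟩
    exact ⟨⟨a, ha, hxa⟩, a, ha', hxa⟩

end bigU

namespace CompOp

variable {F : Species r} (E : CompOp F)

def image (Ω₁ Ω₂ : Obj r) : Set ℕ :=
  E.η Ω₁ Ω₂ '' ((F.obj Ω₁ : Set ℕ) ×ˢ (F.obj Ω₂ : Set ℕ))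

lemma eta_mem_image {Ω₁ Ω₂ : Obj r} {x y : ℕ} (hx : x ∈ F.obj Ω₁) (hy : y ∈ F.obj Ω₂) :
    E.η Ω₁ Ω₂ (x, y) ∈ E.image Ω₁ Ω₂ :=
  Set.mem_image_of_mem _ ⟨hx, hy⟩

lemma image_subset_obj {Ω₁ Ω₂ : Obj r} (h : oDisj Ω₁ Ω₂) :
    E.image Ω₁ Ω₂ ⊆ F.obj (oUnion Ω₁ Ω₂) := by
  rintro _ ⟨⟨x, y⟩, ⟨hx, hy⟩, rfl⟩
  exact E.mem_η h x hx y hy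

lemma eta_mem_image_iff {Ω₁ Ω₂ Ω₃ Ω₄ : Obj r} (h₁₂ : oDisj Ω₁ Ω₂) (h₃₄ : oDisj Ω₃ Ω₄)
    (hU : oUnion Ω₁ Ω₂ = oUnion Ω₃ Ω₄) {x y : ℕ} (hx : x ∈ F.obj Ω₁) (hy : y ∈ F.obj Ω₂) :
    E.η Ω₁ Ω₂ (x, y) ∈ E.image Ω₃ Ω₄ ↔
      x ∈ E.image (oInter Ω₁ Ω₃) (oInter Ω₁ Ω₄) ∧
        y ∈ E.image (oInter Ω₂ Ω₃) (oInter Ω₂ Ω₄) := by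
  have hD : E.image Ω₁ Ω₂ ∩ E.image Ω₃ Ω₄ =
      E.η Ω₁ Ω₂ '' (E.image (oInter Ω₁ Ω₃) (oInter Ω₁ Ω₄) ×ˢ
        E.image (oInter Ω₂ Ω₃) (oInter Ω₂ Ω₄)) :=
    E.D1 h₁₂ h₃₄ hU
  have hz : E.η Ω₁ Ω₂ (x, y) ∈ E.image Ω₃ Ω₄ ↔
      E.η Ω₁ Ω₂ (x, y) ∈ E.image Ω₁ Ω₂ ∩ E.image Ω₃ Ω₄ :=
    (and_iff_right (E.eta_mem_image hx hy)).symm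
  rw [hz, hD]
  constructor
  · rintro ⟨⟨x', y'⟩, ⟨hx', hy'⟩, heq⟩
    have hx'F : x' ∈ F.obj Ω₁ := by
      have := E.image_subset_obj (h₃₄.inter_inter Ω₁ Ω₁) hx'
      rwa [← oInter_oUnion, ← hU, oInter_oUnion_left] at this
    have hy'F : y' ∈ F.obj Ω₂ := by
      have := E.image_subset_obj (h₃₄.inter_inter Ω₂ Ω₂) hy'
      rwa [← oInter_oUnion, ← hU, oInter_oUnion_right] at this
    obtain ⟨rfl, rfl⟩ := Prod.mk.inj (E.inj_η h₁₂ ⟨hx'F, hy'F⟩ ⟨hx, hy⟩ heq)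
    exact ⟨hx', hy'⟩
  · exact fun hxy => Set.mem_image_of_mem _ hxy

lemma mem_image_oEmpty_right {Ω₁ Ω₂ : Obj r} (h : oDisj Ω₁ Ω₂) {x y : ℕ}
    (hx : x ∈ F.obj Ω₁) (hy : y ∈ F.obj Ω₂) : x ∈ E.image Ω₁ (oEmpty r) := by
  have := ((E.eta_mem_image_iff h h rfl hx hy).mp (E.eta_mem_image hx hy)).1
  rwa [oInter_self, h.oInter_eq_oEmpty] at this

lemma mem_image_oEmpty_left {Ω₁ Ω₂ : Obj r} (h : oDisj Ω₁ Ω₂) {x y : ℕ}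
    (hx : x ∈ F.obj Ω₁) (hy : y ∈ F.obj Ω₂) : y ∈ E.image (oEmpty r) Ω₂ := by
  have := ((E.eta_mem_image_iff h h rfl hx hy).mp (E.eta_mem_image hx hy)).2
  rwa [oInter_self, h.symm.oInter_eq_oEmpty] at this

variable {ι : Type} [DecidableEq ι] {Ωs : ι → Obj r}

def splitInter (Ωs : ι → Obj r) (s : Finset ι) : Set ℕ :=
  ⋂ (I : Finset ι) (J : Finset ι) (_ : Disjoint I J) (_ : I ∪ J = s) (_ : I.Nonempty)
    (_ : J.Nonempty), E.image (bigU Ωs I) (bigU Ωs J)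

lemma eta_mem_image_bigU_iff (hd : ∀ i j, i ≠ j → oDisj (Ωs i) (Ωs j))
    {s t I J : Finset ι} (hst : Disjoint s t) (hIJ : Disjoint I J) (hU : s ∪ t = I ∪ J)
    {x y : ℕ} (hx : x ∈ F.obj (bigU Ωs s)) (hy : y ∈ F.obj (bigU Ωs t)) :
    E.η (bigU Ωs s) (bigU Ωs t) (x, y) ∈ E.image (bigU Ωs I) (bigU Ωs J) ↔
      x ∈ E.image (bigU Ωs (s ∩ I)) (bigU Ωs (s ∩ J)) ∧
        y ∈ E.image (bigU Ωs (t ∩ I)) (bigU Ωs (t ∩ J)) := by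
  simpa only [oInter_bigU hd] using E.eta_mem_image_iff (oDisj_bigU hd hst)
    (oDisj_bigU hd hIJ) (by rw [← bigU_union, ← bigU_union, hU]) hx hy

-- The partner `y` is what puts `x` into `η(F[Ω_s] × F[∅])` and `η(F[∅] × F[Ω_s])`.
lemma mem_image_inter_of_mem_splitInter {s : Finset ι} {Ω : Obj r}
    (hsΩ : oDisj (bigU Ωs s) Ω) {x y : ℕ} (hx : x ∈ F.obj (bigU Ωs s))
    (hxs : x ∈ E.splitInter Ωs s) (hy : y ∈ F.obj Ω) {I J : Finset ι} (hIJ : Disjoint I J)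
    (hs : s ⊆ I ∪ J) : x ∈ E.image (bigU Ωs (s ∩ I)) (bigU Ωs (s ∩ J)) := by
  have hsIJ : s ∩ I ∪ s ∩ J = s := by
    rw [← Finset.inter_union_distrib_left, Finset.inter_eq_left.mpr hs]
  rcases (s ∩ I).eq_empty_or_nonempty with hI | hI
  · rw [hI, Finset.empty_union] at hsIJ
    rw [hI, hsIJ, bigU_empty]
    exact E.mem_image_oEmpty_left hsΩ.symm hy hx
  rcases (s ∩ J).eq_empty_or_nonempty with hJ | hJ
  · rw [hJ, Finset.union_empty] at hsIJ
    rw [hJ, hsIJ, bigU_empty]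
    exact E.mem_image_oEmpty_right hsΩ hx hy
  simp only [splitInter, Set.mem_iInter] at hxs
  exact hxs _ _ (hIJ.mono Finset.inter_subset_right Finset.inter_subset_right) hsIJ hI hJ

lemma eta_image_subset_splitInter (hd : ∀ i j, i ≠ j → oDisj (Ωs i) (Ωs j))
    {s t : Finset ι} (hst : Disjoint s t) :
    E.η (bigU Ωs s) (bigU Ωs t) '' ((↑(F.obj (bigU Ωs s)) ∩ E.splitInter Ωs s) ×ˢ
      (↑(F.obj (bigU Ωs t)) ∩ E.splitInter Ωs t)) ⊆ E.splitInter Ωs (s ∪ t) := by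
  rintro _ ⟨⟨x, y⟩, ⟨⟨hx, hxs⟩, hy, hyt⟩, rfl⟩
  have hds := oDisj_bigU hd hst
  simp only [splitInter, Set.mem_iInter]
  intro I J hIJ hU _ _
  refine (E.eta_mem_image_bigU_iff hd hst hIJ hU.symm hx hy).mpr ⟨?_, ?_⟩
  · exact E.mem_image_inter_of_mem_splitInter hds hx hxs hy hIJ (hU ▸ Finset.subset_union_left)
  · exact E.mem_image_inter_of_mem_splitInter hds.symm hy hyt hx hIJ
      (hU ▸ Finset.subset_union_right)

lemma splitInter_union_subset_eta_image (hd : ∀ i j, i ≠ j → oDisj (Ωs i) (Ωs j))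
    {s t : Finset ι} (hst : Disjoint s t) (hs : s.Nonempty) (ht : t.Nonempty) :
    E.splitInter Ωs (s ∪ t) ⊆
      E.η (bigU Ωs s) (bigU Ωs t) '' ((↑(F.obj (bigU Ωs s)) ∩ E.splitInter Ωs s) ×ˢ
        (↑(F.obj (bigU Ωs t)) ∩ E.splitInter Ωs t)) := by
  intro z hz
  simp only [splitInter, Set.mem_iInter] at hz
  obtain ⟨⟨x, y⟩, ⟨hx, hy⟩, rfl⟩ := hz s t hst rfl hs ht
  refine Set.mem_image_of_mem _ ⟨⟨hx, ?_⟩, hy, ?_⟩ <;> simp only [splitInter, Set.mem_iInter]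
  · intro I J hIJ hU hI _
    obtain ⟨hIJt, hU', hsI, hsJt⟩ : Disjoint I (J ∪ t) ∧ s ∪ t = I ∪ (J ∪ t) ∧ s ∩ I = I ∧
        s ∩ (J ∪ t) = J := by
      refine ⟨?_, ?_, ?_, ?_⟩ <;> grind [Finset.disjoint_left]
    have key := ((E.eta_mem_image_bigU_iff hd hst hIJt hU' hx hy).mp
      (hz I (J ∪ t) hIJt hU'.symm hI (ht.mono Finset.subset_union_right))).1
    rwa [hsI, hsJt] at key
  · intro I J hIJ hU _ hJ
    obtain ⟨hsIJ, hU', htsI, htJ⟩ : Disjoint (s ∪ I) J ∧ s ∪ t = s ∪ I ∪ J ∧ t ∩ (s ∪ I) = I ∧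
        t ∩ J = J := by
      refine ⟨?_, ?_, ?_, ?_⟩ <;> grind [Finset.disjoint_left]
    have key := ((E.eta_mem_image_bigU_iff hd hst hsIJ hU' hx hy).mp
      (hz (s ∪ I) J hsIJ hU'.symm (hs.mono Finset.subset_union_left) hJ)).2
    rwa [htsI, htJ] at key

lemma splitInter_singleton (i : ι) : E.splitInter Ωs {i} = Set.univ := by
  simp only [splitInter, Set.iInter_eq_univ]
  intro I J hIJ hU ⟨a, ha⟩ ⟨b, hb⟩
  have ha' : a = i := Finset.mem_singleton.mp (hU ▸ Finset.mem_union_left J ha)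
  have hb' : b = i := Finset.mem_singleton.mp (hU ▸ Finset.mem_union_right I hb)
  exact absurd (ha' ▸ hb' ▸ hb) (Finset.disjoint_left.mp hIJ ha)

lemma splitInter_subset_obj (hd : ∀ i j, i ≠ j → oDisj (Ωs i) (Ωs j)) {s : Finset ι}
    (hs : s.Nontrivial) : E.splitInter Ωs s ⊆ F.obj (bigU Ωs s) := by
  obtain ⟨a, ha⟩ := hs.nonempty
  have hdisj : Disjoint {a} (s.erase a) := Finset.disjoint_singleton_left.mpr (s.notMem_erase a)
  have hU : {a} ∪ s.erase a = s := by rw [← Finset.insert_eq, Finset.insert_erase ha]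
  intro z hz
  simp only [splitInter, Set.mem_iInter] at hz
  have := E.image_subset_obj (oDisj_bigU hd hdisj)
    (hz {a} (s.erase a) hdisj hU (Finset.singleton_nonempty a) hs.erase_nonempty)
  rwa [← bigU_union, hU] at this

lemma eta_image_obj_inter_splitInter (hd : ∀ i j, i ≠ j → oDisj (Ωs i) (Ωs j))
    {s t : Finset ι} (hst : Disjoint s t) (hs : s.Nonempty) (ht : t.Nonempty) :
    E.η (bigU Ωs s) (bigU Ωs t) '' ((↑(F.obj (bigU Ωs s)) ∩ E.splitInter Ωs s) ×ˢ
      (↑(F.obj (bigU Ωs t)) ∩ E.splitInter Ωs t)) =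
      ↑(F.obj (bigU Ωs (s ∪ t))) ∩ E.splitInter Ωs (s ∪ t) := by
  refine subset_antisymm (Set.subset_inter ?_ (E.eta_image_subset_splitInter hd hst))
    (Set.inter_subset_right.trans (E.splitInter_union_subset_eta_image hd hst hs ht))
  rw [bigU_union]
  exact (Set.image_mono (Set.prod_mono Set.inter_subset_left Set.inter_subset_left)).trans
    (E.image_subset_obj (oDisj_bigU hd hst))

end CompOp

lemma Brack.eq_obj_inter_splitInter {F : Species r} {E : CompOp F} {ι : Type} [DecidableEq ι]
    {Ωs : ι → Obj r} (hd : ∀ i j, i ≠ j → oDisj (Ωs i) (Ωs j)) {s : Finset ι} {B : Set ℕ}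
    (hB : Brack F E Ωs (fun Ω => (F.obj Ω : Set ℕ)) s B) :
    B = ↑(F.obj (bigU Ωs s)) ∩ E.splitInter Ωs s := by
  induction hB with
  | single i => rw [E.splitInter_singleton, Set.inter_univ, bigU_singleton]
  | node hst hs ht _ _ ih₁ ih₂ => rw [ih₁, ih₂, E.eta_image_obj_inter_splitInter hd hst hs ht]

theorem stmt6_general {r : ℕ} (F : Species r) (E : CompOp F)
    (m : ℕ) (hm : 2 ≤ m) (Ωs : Fin m → Obj r)
    (hd : ∀ i j, i ≠ j → oDisj (Ωs i) (Ωs j))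
    (B : Set ℕ) (hB : Brack F E Ωs (fun Ω => (F.obj Ω : Set ℕ)) Finset.univ B) :
    B = ⋂ (I : Finset (Fin m)) (J : Finset (Fin m)) (_ : Disjoint I J)
          (_ : I ∪ J = Finset.univ) (_ : I.Nonempty) (_ : J.Nonempty),
        E.η (bigU Ωs I) (bigU Ωs J) ''
          ((F.obj (bigU Ωs I) : Set ℕ) ×ˢ (F.obj (bigU Ωs J) : Set ℕ)) := by
  have : Nontrivial (Fin m) := Fin.nontrivial_iff_two_le.mpr hm
  rw [hB.eq_obj_inter_splitInter hd,
    Set.inter_eq_right.mpr (E.splitInter_subset_obj hd Finset.univ_nontrivial)]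
  rfl

/-- `m`-Permutability for `(F, Η)`: every `Η`-bracketing of `F[Ω₁], …, F[Ω_m]`
equals the intersection over all ordered pairs `(I, J)` of nonempty disjoint sets
with `I ∪ J = {1, …, m}` of the sets `η(F[Ω_I] × F[Ω_J])`; in particular all
`Η`-bracketings are equal to each other. -/
theorem stmt6 {r : ℕ} (hr : 0 < r) (F : Species r) (E : CompOp F)
    (hF : ∃ Ω : Obj r, (F.obj Ω).Nonempty)
    (m : ℕ) (hm : 2 ≤ m) (Ωs : Fin m → Obj r)
    (hd : ∀ i j, i ≠ j → oDisj (Ωs i) (Ωs j))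
    (B : Set ℕ) (hB : Brack F E Ωs (fun Ω => (F.obj Ω : Set ℕ)) Finset.univ B) :
    B = ⋂ (I : Finset (Fin m)) (J : Finset (Fin m)) (_ : Disjoint I J)
          (_ : I ∪ J = Finset.univ) (_ : I.Nonempty) (_ : J.Nonempty),
        E.η (bigU Ωs I) (bigU Ωs J) ''
          ((F.obj (bigU Ωs I) : Set ℕ) ×ˢ (F.obj (bigU Ωs J) : Set ℕ)) :=
  stmt6_general F E m hm Ωs hd B hB

end
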